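/- arXiv:2302.10333 — 3 statements merged into one kernel-verified Lean document; each statement's English description precedes it below -/
import Mathlib

section
/- Let r = n+1, with b_1,…,b_n distinct mod π, ν = Σ_{j=1}^{n+1} a_j − Σ_{j=1}^{n} b_j, and z avoiding poles. Then ∏_{j=1}^{n+1} sin(a_j−z) / ∏_{j=1}^{n} sin(b_j−z) = sin(ν−z) + Σ_{j=1}^{n} [∏_{k=1}^{n+1} sin(a_k−b_j)] / [∏_{m≠j} sin(b_m−b_j) · sin(b_j−z)]. -/
/-!
With `E x = exp (2 i x)` one has `sin (x - y) = (i/2) e^{-i(x+y)} (E y - E x)`. So, up to the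
factor `(i/2) e^{-i(ν+z)}`, the left side is the rational function `∏ (w - E a_k) / ∏ (w - E b_j)`
of `w = E z`, and the identity is its partial-fraction expansion, i.e. Lagrange interpolation of
the monic polynomial `∏ (X - E a_k)` at the nodes `0, E b_1, …, E b_n`. The node `0` produces
`w - ∏ E a_k / ∏ E b_j = w - E ν`, which becomes `sin (ν - z)`, and the node `E b_j` the `j`-th
summand.
-/

open Finset Polynomial Lagrange

theorem Lagrange.eval_eq_eval_nodal_mul_one_add_sum {F ι : Type*} [Field F] [DecidableEq ι]
    {s : Finset ι} {v : ι → F} (hvs : Set.InjOn v s) {P : F[X]} (hP : P.Monic)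
    (hdeg : P.degree = #s) {x : F} (hx : ∀ i ∈ s, x ≠ v i) :
    P.eval x = (nodal s v).eval x *
      (1 + ∑ i ∈ s, P.eval (v i) / ((nodal s v).derivative.eval (v i) * (x - v i))) := by
  have hlt : (P - nodal s v).degree < #s := by
    rw [← hdeg]
    refine degree_sub_lt_left (by rw [hdeg, degree_nodal]) hP.ne_zero ?_
    rw [hP.leadingCoeff, nodal_monic.leadingCoeff]
  have hinterp := eq_interpolate_of_eval_eq (fun i => P.eval (v i)) hvs hlt fun i hi => by
    rw [eval_sub, eval_nodal_at_node hi, sub_zero]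
  rw [sub_eq_iff_eq_add] at hinterp
  conv_lhs => rw [hinterp]
  rw [eval_add, eval_interpolate_not_at_node _ hx, mul_one_add, add_comm]
  congr 2
  refine sum_congr rfl fun i hi => ?_
  rw [nodalWeight_eq_eval_derivative_nodal hi, div_eq_mul_inv, mul_inv]
  ring

theorem prod_sub_div_prod_sub_eq_sub_add_sum {K : Type*} [Field K] {n : ℕ}
    (A : Fin (n + 1) → K) {B : Fin n → K} (hB : Function.Injective B) (hB0 : ∀ j, B j ≠ 0)
    {x : K} (hx0 : x ≠ 0) (hx : ∀ j, x ≠ B j) :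
    (∏ k, (x - A k)) / ∏ l, (x - B l) = x - (∏ k, A k) / (∏ l, B l) +
      ∑ j, (x * ∏ k, (B j - A k)) / (B j * (∏ l ∈ univ.erase j, (B j - B l)) * (x - B j)) := by
  have hinj : Set.InjOn (Fin.cons 0 B : Fin (n + 1) → K) (univ : Finset (Fin (n + 1))) := by
    rw [coe_univ, Set.injOn_univ, Fin.cons_injective_iff]
    exact ⟨fun ⟨j, hj⟩ => hB0 j hj, hB⟩
  have hnodes : ∀ i ∈ univ, x ≠ (Fin.cons 0 B : Fin (n + 1) → K) i := by
    intro i _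
    cases i using Fin.cases <;> simp [hx0, hx]
  have hnodal : nodal univ (Fin.cons 0 B : Fin (n + 1) → K) = X * nodal univ B := by
    simp [nodal_eq, Fin.prod_univ_succ]
  have hM : ∏ l, (x - B l) ≠ 0 := prod_ne_zero_iff.2 fun l _ => sub_ne_zero.2 (hx l)
  have hlagrange := eval_eq_eval_nodal_mul_one_add_sum hinj (nodal_monic (s := univ) (v := A))
    (by simp [degree_nodal]) hnodes
  simp only [hnodal, derivative_mul, derivative_X, one_mul, Fin.sum_univ_succ, Fin.cons_zero,
    Fin.cons_succ, eval_add, eval_mul, eval_X, eval_nodal_at_node (mem_univ _),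
    eval_nodal_derivative_eval_node_eq (mem_univ _), zero_mul, add_zero, zero_add, sub_zero] at hlagrange
  simp only [eval_nodal, zero_sub, prod_neg, card_univ, Fintype.card_fin] at hlagrange
  have hprodB : ∏ l, B l ≠ 0 := prod_ne_zero_iff.2 fun l _ => hB0 l
  rw [hlagrange, mul_comm x, mul_assoc, mul_div_cancel_left₀ _ hM, mul_add, mul_one, mul_add,
    ← add_assoc, mul_sum]
  congr 1
  · rw [pow_succ]
    field_simp
    ring
  · exact sum_congr rfl fun j _ => (mul_div_assoc _ _ _).symm

namespace Complex

noncomputable def sinFactor (x y : ℂ) : ℂ := I / 2 * exp (-I * (x + y))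

theorem sinFactor_ne_zero (x y : ℂ) : sinFactor x y ≠ 0 :=
  mul_ne_zero (by simp [I_ne_zero]) (exp_ne_zero _)

theorem sin_sub_eq_sinFactor_mul (x y : ℂ) :
    sin (x - y) = sinFactor x y * (exp (2 * I * y) - exp (2 * I * x)) := by
  rw [sin, sinFactor, mul_assoc, mul_sub, ← exp_add, ← exp_add]
  ring_nf

theorem sin_sub_ne_zero_iff {x y : ℂ} : sin (x - y) ≠ 0 ↔ exp (2 * I * x) ≠ exp (2 * I * y) := by
  rw [sin_sub_eq_sinFactor_mul, mul_ne_zero_iff, sub_ne_zero]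
  exact (and_iff_right (sinFactor_ne_zero x y)).trans ne_comm

theorem prod_sinFactor_div_prod_sinFactor {n : ℕ} (α : Fin (n + 1) → ℂ) (β : Fin n → ℂ) (y : ℂ) :
    (∏ k, sinFactor (α k) y) / ∏ l, sinFactor (β l) y = sinFactor (∑ k, α k - ∑ l, β l) y := by
  simp only [sinFactor, prod_mul_distrib, prod_const, card_univ, Fintype.card_fin, ← exp_sum]
  have hexp : exp (∑ k, -I * (α k + y)) =
      exp (-I * (∑ k, α k - ∑ l, β l + y)) * exp (∑ l, -I * (β l + y)) := by
    rw [← exp_add]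
    congr 1
    simp only [mul_add, sum_add_distrib, sum_const, card_univ, Fintype.card_fin, ← mul_sum]
    ring
  rw [div_eq_iff (by simp [I_ne_zero, exp_ne_zero]), hexp, pow_succ]
  ring

theorem sinFactor_mul_sinFactor_div_sinFactor (x y z : ℂ) :
    sinFactor x y * sinFactor y y / sinFactor y z =
      sinFactor x z * (exp (2 * I * z) / exp (2 * I * y)) := by
  rw [div_eq_iff (sinFactor_ne_zero y z), ← exp_sub]
  have hexp : exp (-I * (x + y)) * exp (-I * (y + y)) =
      exp (-I * (x + z)) * exp (2 * I * z - 2 * I * y) * exp (-I * (y + z)) := by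
    simp only [← exp_add]
    ring_nf
  simp only [sinFactor]
  linear_combination (I / 2) ^ 2 * hexp

theorem prod_sin_sub_div_prod_sin_sub {n : ℕ} (α : Fin (n + 1) → ℂ) {β : Fin n → ℂ}
    (hβ : ∀ j k, j ≠ k → sin (β j - β k) ≠ 0) {z : ℂ} (hz : ∀ j, sin (β j - z) ≠ 0) :
    (∏ k, sin (α k - z)) / ∏ l, sin (β l - z) = sin ((∑ k, α k - ∑ l, β l) - z) +
      ∑ j, (∏ k, sin (α k - β j)) / ((∏ l ∈ univ.erase j, sin (β l - β j)) * sin (β j - z)) := by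
  set ν := ∑ k, α k - ∑ l, β l
  have hinj : Function.Injective fun l => exp (2 * I * β l) := fun j k hjk => by
    by_contra hne
    exact sin_sub_ne_zero_iff.1 (hβ j k hne) hjk
  have hpartial := prod_sub_div_prod_sub_eq_sub_add_sum (fun k => exp (2 * I * α k)) hinj
    (fun _ => exp_ne_zero _) (exp_ne_zero (2 * I * z)) fun j => (sin_sub_ne_zero_iff.1 (hz j)).symm
  have hN : (∏ k, exp (2 * I * α k)) / ∏ l, exp (2 * I * β l) = exp (2 * I * ν) := by
    rw [← exp_sum, ← exp_sum, ← exp_sub, ← mul_sum, ← mul_sum, mul_sub]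
  simp only [sin_sub_eq_sinFactor_mul, prod_mul_distrib]
  rw [mul_div_mul_comm, prod_sinFactor_div_prod_sinFactor, hpartial, hN, mul_add, mul_sum]
  congr 1
  refine sum_congr rfl fun j _ => ?_
  have hscalar : (∏ k, sinFactor (α k) (β j)) /
      ((∏ l ∈ univ.erase j, sinFactor (β l) (β j)) * sinFactor (β j) z) =
      sinFactor ν z * (exp (2 * I * z) / exp (2 * I * β j)) := by
    rw [← sinFactor_mul_sinFactor_div_sinFactor, ← prod_sinFactor_div_prod_sinFactor,
      ← mul_prod_erase univ _ (mem_univ j)]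
    field_simp [sinFactor_ne_zero]
  conv_rhs => rw [mul_mul_mul_comm, mul_div_mul_comm, hscalar]
  rw [mul_assoc _ (exp (2 * I * z) / _), div_mul_div_comm, mul_assoc (exp (2 * I * β j))]

end Complex

theorem kappa_one_expansion (n : ℕ) (a : Fin (n + 1) → ℝ) (b : Fin n → ℝ)
    (hb : ∀ j k, j ≠ k → Real.sin (b j - b k) ≠ 0)
    (ν : ℝ) (hν : ν = ∑ j, a j - ∑ j, b j)
    (z : ℂ) (hz : ∀ j, Complex.sin ((b j : ℂ) - z) ≠ 0) :
    (∏ j, Complex.sin ((a j : ℂ) - z)) / (∏ j, Complex.sin ((b j : ℂ) - z))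
      = Complex.sin ((ν : ℂ) - z) +
        ∑ j, (∏ k, Complex.sin ((a k : ℂ) - (b j : ℂ))) /
          ((∏ l ∈ univ.erase j, Complex.sin ((b l : ℂ) - (b j : ℂ))) *
            Complex.sin ((b j : ℂ) - z)) := by
  have hb' : ∀ j k, j ≠ k → Complex.sin ((b j : ℂ) - b k) ≠ 0 := fun j k hjk => by
    rw [← Complex.ofReal_sub, ← Complex.ofReal_sin]
    exact_mod_cast hb j k hjk
  have hν' : (ν : ℂ) = ∑ k, (a k : ℂ) - ∑ l, (b l : ℂ) := by
    rw [hν]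
    push_cast
    rfl
  rw [hν']
  exact Complex.prod_sin_sub_div_prod_sin_sub _ hb' hz
end

section
/- Let b_0,…,b_n be real numbers distinct mod π, m ≥ 0 an integer, ϑ an integer with ϑ ≤ m+n and ϑ ≡ m+n (mod 2), and set B = Σ_{j=0}^n b_j and E_j⁺ = (2i)^{n+1} h_j(e^{2ib_0},…,e^{2ib_n}) e^{iB}. Then for all complex z avoiding poles: e^{imz}/∏_{k=0}^n sin(z−b_k) = Σ_{j=0}^{(m−n−ϑ)/2−1} E_j⁺ e^{i(m−n−2j−1)z} + Σ_{k=0}^n e^{i(m−ϑ)b_k} e^{iϑz} / [ ∏_{j≠k} sin(b_k−b_j) · sin(z−b_k) ]. -/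
open Finset

/-- The complete homogeneous symmetric polynomial of degree `j` in the
variables `x 0, …, x (N-1)`. -/
noncomputable def hsym (N j : ℕ) (x : Fin N → ℂ) : ℂ :=
  ∑ f ∈ univ.filter (fun f : Fin j → Fin N => ∀ p q : Fin j, p ≤ q → f p ≤ f q),
    ∏ i, x (f i)

lemma hsym_zero (N : ℕ) (x : Fin N → ℂ) : hsym N 0 x = 1 := by
  simp [hsym, Finset.filter_true_of_mem]

lemma hsym_nil (j : ℕ) (x : Fin 0 → ℂ) : hsym 0 (j+1) x = 0 := by
  simp [hsym]

lemma hsym_one (j : ℕ) (x : Fin 1 → ℂ) : hsym 1 j x = x 0 ^ j := by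
  simp [hsym, Finset.filter_true_of_mem, Subsingleton.elim _ (0 : Fin 1)]

lemma hsym_succ (N l : ℕ) (x : Fin (N+1) → ℂ) :
    hsym (N+1) (l+1) x
      = hsym N (l+1) (x ∘ Fin.castSucc) + x (Fin.last N) * hsym (N+1) l x := by
  classical
  unfold hsym
  rw [← Finset.sum_filter_add_sum_filter_not
    (univ.filter (fun f : Fin (l+1) → Fin (N+1) => ∀ p q : Fin (l+1), p ≤ q → f p ≤ f q))
    (fun f => f (Fin.last l) ≠ Fin.last N)]
  congr 1
  · -- part with f (last l) ≠ last N  ↦  hsym N (l+1) (x ∘ castSucc)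
    rw [Finset.filter_filter]
    refine Finset.sum_bij'
      (i := fun f hf => fun p => Fin.castLT (f p) ?_)
      (j := fun g hg => Fin.castSucc ∘ g) ?_ ?_ ?_ ?_ ?_
    · -- f p < N
      simp only [Finset.mem_filter, Finset.mem_univ, true_and] at hf
      have h1 : f p ≤ f (Fin.last l) := hf.1 p (Fin.last l) (Fin.le_last p)
      have h2 : (f (Fin.last l)).val ≠ N := fun h => hf.2 (Fin.ext h)
      have := (f (Fin.last l)).isLt
      have := Fin.le_def.mp h1
      omega
    · intro f hf
      simp only [Finset.mem_filter, Finset.mem_univ, true_and] at hf ⊢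
      intro p q hpq
      have := Fin.le_def.mp (hf.1 p q hpq)
      exact Fin.le_def.mpr (by simpa using this)
    · intro g hg
      simp only [Finset.mem_filter, Finset.mem_univ, true_and] at hg ⊢
      constructor
      · intro p q hpq
        exact Fin.castSucc_le_castSucc_iff.mpr (hg p q hpq)
      · exact Fin.ne_last_of_lt (Fin.castSucc_lt_last (g (Fin.last l)))
    · intro f hf; funext p; simp [Fin.castSucc_castLT]
    · intro g hg; funext p; rfl
    · intro f hf
      apply Finset.prod_congr rfl
      intro p _
      simp [Fin.castSucc_castLT]
  · -- part with f (last l) = last N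
    rw [Finset.filter_filter, Finset.mul_sum]
    simp only [not_ne_iff]
    refine Finset.sum_bij'
      (i := fun f _ => f ∘ Fin.castSucc)
      (j := fun g _ => Fin.snoc g (Fin.last N)) ?_ ?_ ?_ ?_ ?_
    · intro f hf
      simp only [Finset.mem_filter, Finset.mem_univ, true_and] at hf ⊢
      intro p q hpq
      exact hf.1 _ _ (Fin.castSucc_le_castSucc_iff.mpr hpq)
    · intro g hg
      simp only [Finset.mem_filter, Finset.mem_univ, true_and] at hg ⊢
      refine ⟨?_, by simp⟩
      intro p q hpq
      rcases Fin.eq_castSucc_or_eq_last q with ⟨q', rfl⟩ | rfl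
      · have hp : p ≠ Fin.last l := Fin.ne_last_of_lt (lt_of_le_of_lt hpq (Fin.castSucc_lt_last q'))
        rcases Fin.eq_castSucc_or_eq_last p with ⟨p', rfl⟩ | rfl
        · simp only [Fin.snoc_castSucc]
          exact hg p' q' (Fin.castSucc_le_castSucc_iff.mp hpq)
        · exact absurd rfl hp
      · simp only [Fin.snoc_last]
        exact Fin.le_last _
    · intro f hf
      simp only [Finset.mem_filter, Finset.mem_univ, true_and] at hf
      funext p
      rcases Fin.eq_castSucc_or_eq_last p with ⟨p', rfl⟩ | rfl
      · simp
      · simp [hf.2]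
    · intro g hg; funext p; simp
    · intro f hf
      simp only [Finset.mem_filter, Finset.mem_univ, true_and] at hf
      rw [Fin.prod_univ_castSucc]
      rw [hf.2, mul_comm]
      rfl
-- expand

lemma hsym_expand (N l : ℕ) (x : Fin (N+1) → ℂ) :
    hsym (N+1) l x
      = ∑ i ∈ Finset.range (l+1),
          x (Fin.last N) ^ i * hsym N (l - i) (x ∘ Fin.castSucc) := by
  induction l with
  | zero => simp [hsym_zero]
  | succ l ih =>
      rw [hsym_succ, ih, Finset.sum_range_succ' _ (l+1), Finset.mul_sum]
      simp only [pow_zero, one_mul, Nat.sub_zero, pow_succ]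
      rw [add_comm]
      congr 1
      apply Finset.sum_congr rfl
      intro i hi
      ring_nf
      congr 2
      omega

-- geometric division lemma
lemma geom_div (a x : ℂ) (hx : x ≠ a) (M : ℕ) :
    x ^ M / (x - a) = (∑ j ∈ Finset.range M, a ^ j * x ^ (M - 1 - j)) + a ^ M / (x - a) := by
  have hxa : x - a ≠ 0 := sub_ne_zero.mpr hx
  have h := geom_sum₂_mul a x M
  field_simp
  linear_combination h

lemma erase_castSucc_prod {n : ℕ} (k : Fin (n+1)) (g : Fin (n+2) → ℂ) :
    ∏ j ∈ univ.erase (Fin.castSucc k), g j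
      = (∏ j ∈ univ.erase k, g (Fin.castSucc j)) * g (Fin.last (n+1)) := by
  have hset : (univ.erase (Fin.castSucc k) : Finset (Fin (n+2)))
      = insert (Fin.last (n+1)) ((univ.erase k).image Fin.castSucc) := by
    ext j
    simp only [mem_erase, mem_univ, and_true, mem_insert, mem_image]
    constructor
    · intro hj
      rcases Fin.eq_castSucc_or_eq_last j with ⟨j', rfl⟩ | rfl
      · exact Or.inr ⟨j', fun h => hj (by rw [h]), rfl⟩
      · exact Or.inl rfl
    · rintro (rfl | ⟨j', hj', rfl⟩)
      · exact (Fin.castSucc_lt_last k).ne'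
      · exact fun h => hj' (Fin.castSucc_injective _ h)
  rw [hset, prod_insert (by simp [Fin.ext_iff]; omega), prod_image
    (fun a _ b _ h => Fin.castSucc_injective _ h), mul_comm]

lemma erase_last_prod {n : ℕ} (g : Fin (n+2) → ℂ) :
    ∏ j ∈ univ.erase (Fin.last (n+1)), g j = ∏ j : Fin (n+1), g (Fin.castSucc j) := by
  have hset : (univ.erase (Fin.last (n+1)) : Finset (Fin (n+2)))
      = univ.image Fin.castSucc := by
    ext j
    simp only [mem_erase, mem_univ, and_true, mem_image]
    constructor
    · intro hj
      rcases Fin.eq_castSucc_or_eq_last j with ⟨j', rfl⟩ | rfl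
      · exact ⟨j', trivial, rfl⟩
      · exact absurd rfl hj
    · rintro ⟨j', -, rfl⟩
      exact (Fin.castSucc_lt_last j').ne
  rw [hset, prod_image (fun a _ b _ h => Fin.castSucc_injective _ h)]

lemma triangle (A : ℕ) (F : ℕ → ℕ → ℂ) :
    ∑ j ∈ Finset.range A, ∑ i ∈ Finset.range (A - 1 - j), F j i
      = ∑ l ∈ Finset.range (A - 1), ∑ i ∈ Finset.range (l + 1), F (l - i) i := by
  rw [Finset.sum_sigma', Finset.sum_sigma']
  refine Finset.sum_nbij' (i := fun p => ⟨p.1 + p.2, p.2⟩) (j := fun p => ⟨p.1 - p.2, p.2⟩)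
    ?_ ?_ ?_ ?_ ?_
  · rintro ⟨j, i⟩ hp
    simp only [Finset.mem_sigma, Finset.mem_range] at hp ⊢
    omega
  · rintro ⟨l, i⟩ hp
    simp only [Finset.mem_sigma, Finset.mem_range] at hp ⊢
    omega
  · rintro ⟨j, i⟩ hp
    simp only [Finset.mem_sigma, Finset.mem_range] at hp
    simp only [Sigma.mk.inj_iff, heq_eq_eq, and_true]
    omega
  · rintro ⟨l, i⟩ hp
    simp only [Finset.mem_sigma, Finset.mem_range] at hp
    simp only [Sigma.mk.inj_iff, heq_eq_eq, and_true]
    omega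
  · rintro ⟨j, i⟩ hp
    simp only [Finset.mem_sigma, Finset.mem_range] at hp
    simp only [Nat.add_sub_cancel]
lemma pf_split (r D a b x : ℂ) (hD : D ≠ 0) (ha : x - a ≠ 0) (hb : x - b ≠ 0)
    (hab : a - b ≠ 0) (hba : b - a ≠ 0) :
    (r / (D * (x - a))) / (x - b)
      = r / ((D * (a - b)) * (x - a)) + (r / (D * (b - a))) / (x - b) := by
  field_simp
  ring

lemma key : ∀ (n : ℕ) (c : Fin (n+1) → ℂ), Function.Injective c →
    ∀ (M : ℕ) (x : ℂ), (∀ k, x ≠ c k) →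
    x ^ M / ∏ k, (x - c k)
      = (∑ j ∈ Finset.range (M - n), hsym (n+1) j c * x ^ (M - n - 1 - j))
        + ∑ k, c k ^ M / ((∏ j ∈ univ.erase k, (c k - c j)) * (x - c k)) := by
  intro n
  induction n with
  | zero =>
      intro c _ M x hx
      have h0 : (univ.erase (0 : Fin 1)) = (∅ : Finset (Fin 1)) := rfl
      rw [Fin.prod_univ_one, Fin.sum_univ_one, h0, Finset.prod_empty, one_mul]
      have h1 : ∀ j, hsym (0+1) j c = c 0 ^ j := fun j => hsym_one j c
      simp only [Nat.sub_zero, h1]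
      exact geom_div (c 0) x (hx 0) M
  | succ n ih =>
      intro c hc M x hx
      have hc'inj : Function.Injective (c ∘ Fin.castSucc) :=
        fun a b h => Fin.castSucc_injective _ (hc h)
      have hclne : ∀ k, c (Fin.last (n+1)) ≠ (c ∘ Fin.castSucc) k :=
        fun k h => (Fin.castSucc_lt_last k).ne' (hc h)
      have hx' : ∀ k, x ≠ (c ∘ Fin.castSucc) k := fun k => hx _
      have hxl : x - c (Fin.last (n+1)) ≠ 0 := sub_ne_zero.mpr (hx _)
      have hxk : ∀ k, x - (c ∘ Fin.castSucc) k ≠ 0 := fun k => sub_ne_zero.mpr (hx' k)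
      have hclk : ∀ k, (c ∘ Fin.castSucc) k - c (Fin.last (n+1)) ≠ 0 :=
        fun k => sub_ne_zero.mpr (fun h => hclne k h.symm)
      have hD : ∀ k : Fin (n+1),
          (∏ j ∈ univ.erase k, ((c ∘ Fin.castSucc) k - (c ∘ Fin.castSucc) j)) ≠ 0 := by
        intro k
        refine Finset.prod_ne_zero_iff.mpr (fun j hj => sub_ne_zero.mpr (fun h => ?_))
        exact (Finset.mem_erase.mp hj).1 (hc'inj h).symm
      have IH1 := ih (c ∘ Fin.castSucc) hc'inj M x hx'
      have IH2 := ih (c ∘ Fin.castSucc) hc'inj M (c (Fin.last (n+1))) hclne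
      have hprod : (∏ k : Fin (n+2), (x - c k))
          = (∏ k : Fin (n+1), (x - (c ∘ Fin.castSucc) k)) * (x - c (Fin.last (n+1))) :=
        Fin.prod_univ_castSucc _
      have E1 : x ^ M / ∏ k : Fin (n+2), (x - c k)
          = ((∑ j ∈ Finset.range (M-n), hsym (n+1) j (c ∘ Fin.castSucc) * x ^ (M-n-1-j))
             + ∑ k, (c ∘ Fin.castSucc) k ^ M /
                ((∏ j ∈ univ.erase k, ((c ∘ Fin.castSucc) k - (c ∘ Fin.castSucc) j))
                  * (x - (c ∘ Fin.castSucc) k))) / (x - c (Fin.last (n+1))) := by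
        rw [hprod, ← div_div, IH1]
      have E2 : (∑ j ∈ Finset.range (M-n), hsym (n+1) j (c ∘ Fin.castSucc) * x ^ (M-n-1-j))
            / (x - c (Fin.last (n+1)))
          = (∑ j ∈ Finset.range (M-n), hsym (n+1) j (c ∘ Fin.castSucc) *
              ∑ i ∈ Finset.range (M-n-1-j), c (Fin.last (n+1)) ^ i * x ^ (M-n-2-j-i))
            + (∑ j ∈ Finset.range (M-n), hsym (n+1) j (c ∘ Fin.castSucc) *
                c (Fin.last (n+1)) ^ (M-n-1-j)) / (x - c (Fin.last (n+1))) := by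
        rw [Finset.sum_div, Finset.sum_div, ← Finset.sum_add_distrib]
        refine Finset.sum_congr rfl (fun j hj => ?_)
        rw [mul_div_assoc, geom_div (c (Fin.last (n+1))) x (hx _) (M-n-1-j), mul_add,
          mul_div_assoc]
        congr 2
        refine Finset.sum_congr rfl (fun i hi => ?_)
        rw [show M-n-1-j-1-i = M-n-2-j-i by omega]
      have E3 : (∑ k, (c ∘ Fin.castSucc) k ^ M /
              ((∏ j ∈ univ.erase k, ((c ∘ Fin.castSucc) k - (c ∘ Fin.castSucc) j))
                * (x - (c ∘ Fin.castSucc) k))) / (x - c (Fin.last (n+1)))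
          = (∑ k, (c ∘ Fin.castSucc) k ^ M /
              (((∏ j ∈ univ.erase k, ((c ∘ Fin.castSucc) k - (c ∘ Fin.castSucc) j))
                * ((c ∘ Fin.castSucc) k - c (Fin.last (n+1)))) * (x - (c ∘ Fin.castSucc) k)))
            + (∑ k, (c ∘ Fin.castSucc) k ^ M /
                ((∏ j ∈ univ.erase k, ((c ∘ Fin.castSucc) k - (c ∘ Fin.castSucc) j))
                  * (c (Fin.last (n+1)) - (c ∘ Fin.castSucc) k))) / (x - c (Fin.last (n+1))) := by
        rw [Finset.sum_div, Finset.sum_div, ← Finset.sum_add_distrib]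
        refine Finset.sum_congr rfl (fun k _ => ?_)
        exact pf_split _ _ _ _ _ (hD k) (hxk k) hxl (hclk k)
          (sub_ne_zero.mpr (hclne k))
      have E5 : (∑ j ∈ Finset.range (M-n), hsym (n+1) j (c ∘ Fin.castSucc) *
              ∑ i ∈ Finset.range (M-n-1-j), c (Fin.last (n+1)) ^ i * x ^ (M-n-2-j-i))
          = ∑ l ∈ Finset.range (M-(n+1)), hsym (n+2) l c * x ^ (M-(n+1)-1-l) := by
        have ht := triangle (M-n) (fun j i => hsym (n+1) j (c ∘ Fin.castSucc) *
          (c (Fin.last (n+1)) ^ i * x ^ (M-n-2-j-i)))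
        calc (∑ j ∈ Finset.range (M-n), hsym (n+1) j (c ∘ Fin.castSucc) *
              ∑ i ∈ Finset.range (M-n-1-j), c (Fin.last (n+1)) ^ i * x ^ (M-n-2-j-i))
            = ∑ j ∈ Finset.range (M-n), ∑ i ∈ Finset.range ((M-n)-1-j),
                hsym (n+1) j (c ∘ Fin.castSucc) *
                  (c (Fin.last (n+1)) ^ i * x ^ (M-n-2-j-i)) := by
              exact Finset.sum_congr rfl (fun j _ => Finset.mul_sum _ _ _)
          _ = ∑ l ∈ Finset.range ((M-n)-1), ∑ i ∈ Finset.range (l+1),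
                hsym (n+1) (l-i) (c ∘ Fin.castSucc) *
                  (c (Fin.last (n+1)) ^ i * x ^ (M-n-2-(l-i)-i)) := ht
          _ = ∑ l ∈ Finset.range (M-(n+1)), hsym (n+2) l c * x ^ (M-(n+1)-1-l) := by
              refine Finset.sum_congr (by rw [show M-n-1 = M-(n+1) by omega]) (fun l hl => ?_)
              rw [hsym_expand (n+1) l c, Finset.sum_mul]
              refine Finset.sum_congr rfl (fun i hi => ?_)
              simp only [Finset.mem_range] at hl hi
              rw [show M-n-2-(l-i)-i = M-(n+1)-1-l by omega]
              ring
      have E6 : (∑ K : Fin (n+2), c K ^ M /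
              ((∏ j ∈ univ.erase K, (c K - c j)) * (x - c K)))
          = (∑ k, (c ∘ Fin.castSucc) k ^ M /
              (((∏ j ∈ univ.erase k, ((c ∘ Fin.castSucc) k - (c ∘ Fin.castSucc) j))
                * ((c ∘ Fin.castSucc) k - c (Fin.last (n+1)))) * (x - (c ∘ Fin.castSucc) k)))
            + c (Fin.last (n+1)) ^ M /
              ((∏ k : Fin (n+1), (c (Fin.last (n+1)) - (c ∘ Fin.castSucc) k))
                * (x - c (Fin.last (n+1)))) := by
        rw [Fin.sum_univ_castSucc]
        congr 1
        · refine Finset.sum_congr rfl (fun k _ => ?_)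
          rw [erase_castSucc_prod k (fun j => c (Fin.castSucc k) - c j)]
          rfl
        · rw [erase_last_prod (fun j => c (Fin.last (n+1)) - c j)]
          rfl
      calc x ^ M / ∏ k : Fin (n+2), (x - c k)
          = _ := E1
        _ = (∑ j ∈ Finset.range (M-n), hsym (n+1) j (c ∘ Fin.castSucc) * x ^ (M-n-1-j))
              / (x - c (Fin.last (n+1)))
            + (∑ k, (c ∘ Fin.castSucc) k ^ M /
                ((∏ j ∈ univ.erase k, ((c ∘ Fin.castSucc) k - (c ∘ Fin.castSucc) j))
                  * (x - (c ∘ Fin.castSucc) k))) / (x - c (Fin.last (n+1))) :=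
            add_div _ _ _
        _ = (∑ l ∈ Finset.range (M-(n+1)), hsym (n+2) l c * x ^ (M-(n+1)-1-l))
            + ((∑ k, (c ∘ Fin.castSucc) k ^ M /
                (((∏ j ∈ univ.erase k, ((c ∘ Fin.castSucc) k - (c ∘ Fin.castSucc) j))
                  * ((c ∘ Fin.castSucc) k - c (Fin.last (n+1)))) * (x - (c ∘ Fin.castSucc) k)))
              + ((∑ j ∈ Finset.range (M-n), hsym (n+1) j (c ∘ Fin.castSucc) *
                    c (Fin.last (n+1)) ^ (M-n-1-j))
                + ∑ k, (c ∘ Fin.castSucc) k ^ M /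
                    ((∏ j ∈ univ.erase k, ((c ∘ Fin.castSucc) k - (c ∘ Fin.castSucc) j))
                      * (c (Fin.last (n+1)) - (c ∘ Fin.castSucc) k)))
                / (x - c (Fin.last (n+1)))) := by
            rw [E2, E3, E5, add_div]
            ring
        _ = (∑ l ∈ Finset.range (M-(n+1)), hsym (n+2) l c * x ^ (M-(n+1)-1-l))
            + ((∑ k, (c ∘ Fin.castSucc) k ^ M /
                (((∏ j ∈ univ.erase k, ((c ∘ Fin.castSucc) k - (c ∘ Fin.castSucc) j))
                  * ((c ∘ Fin.castSucc) k - c (Fin.last (n+1)))) * (x - (c ∘ Fin.castSucc) k)))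
              + c (Fin.last (n+1)) ^ M /
                  ((∏ k : Fin (n+1), (c (Fin.last (n+1)) - (c ∘ Fin.castSucc) k))
                    * (x - c (Fin.last (n+1))))) := by
            rw [← IH2, div_div]
        _ = (∑ l ∈ Finset.range (M-(n+1)), hsym (n+2) l c * x ^ (M-(n+1)-1-l))
            + ∑ K : Fin (n+2), c K ^ M /
                ((∏ j ∈ univ.erase K, (c K - c j)) * (x - c K)) := by
            rw [E6]
-- MAIN THEOREM PART (appended after prelude)
lemma sin_to_exp (w v : ℂ) :
    Complex.exp (2*Complex.I*w) - Complex.exp (2*Complex.I*v)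
      = 2*Complex.I*Complex.exp (Complex.I*(w+v)) * Complex.sin (w - v) := by
  have h := Complex.two_sin (w - v)
  have e1 : Complex.exp (Complex.I*(w+v)) * Complex.exp (-(w-v)*Complex.I)
      = Complex.exp (2*Complex.I*v) := by rw [← Complex.exp_add]; congr 1; ring
  have e2 : Complex.exp (Complex.I*(w+v)) * Complex.exp ((w-v)*Complex.I)
      = Complex.exp (2*Complex.I*w) := by rw [← Complex.exp_add]; congr 1; ring
  have hI := Complex.I_sq
  linear_combination e1 - e2 - (Complex.I*Complex.exp (Complex.I*(w+v)))*h
    - ((Complex.exp (-(w-v)*Complex.I) - Complex.exp ((w-v)*Complex.I))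
        *Complex.exp (Complex.I*(w+v)))*hI

theorem exp_over_sine_expansion (n : ℕ) (b : Fin (n + 1) → ℝ)
    (hb : ∀ j k, j ≠ k → Real.sin (b j - b k) ≠ 0)
    (m : ℕ) (ϑ : ℤ) (hϑ : ϑ ≤ (m : ℤ) + n)
    (hpar : ϑ % 2 = ((m : ℤ) + n) % 2)
    (B : ℝ) (hB : B = ∑ j, b j)
    (z : ℂ) (hz : ∀ k, Complex.sin (z - (b k : ℂ)) ≠ 0) :
    Complex.exp (Complex.I * m * z) / ∏ k, Complex.sin (z - (b k : ℂ))
      = (∑ j ∈ Finset.range (((m : ℤ) - n - ϑ) / 2).toNat,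
          (2 * Complex.I) ^ (n + 1) *
            hsym (n + 1) j (fun k => Complex.exp (2 * Complex.I * (b k : ℂ))) *
            Complex.exp (Complex.I * (B : ℂ)) *
            Complex.exp (Complex.I * (((m : ℤ) - n - 2 * j - 1 : ℤ) : ℂ) * z))
        + ∑ k, Complex.exp (Complex.I * (((m : ℤ) - ϑ : ℤ) : ℂ) * (b k : ℂ)) *
            Complex.exp (Complex.I * (ϑ : ℂ) * z) /
            ((∏ j ∈ univ.erase k, Complex.sin ((b k : ℂ) - (b j : ℂ))) *
              Complex.sin (z - (b k : ℂ))) := by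
  classical
  set c : Fin (n+1) → ℂ := fun k => Complex.exp (2 * Complex.I * (b k : ℂ)) with hcdef
  set x : ℂ := Complex.exp (2 * Complex.I * z) with hxdef
  set I := Complex.I with hIdef
  have h2I : (2*I : ℂ) ≠ 0 := by simp [hIdef, Complex.I_ne_zero]
  have hxc : ∀ k, x - c k = 2*I*Complex.exp (I*(z + (b k : ℂ))) * Complex.sin (z - (b k:ℂ)) :=
    fun k => sin_to_exp z (b k)
  have hcc : ∀ k j, c k - c j
      = 2*I*Complex.exp (I*((b k:ℂ) + (b j:ℂ))) * Complex.sin ((b k:ℂ) - (b j:ℂ)) :=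
    fun k j => sin_to_exp (b k) (b j)
  have hsinC : ∀ k j, k ≠ j → Complex.sin ((b k:ℂ) - (b j:ℂ)) ≠ 0 := by
    intro k j hkj
    have h1 : ((b k : ℂ) - (b j:ℂ)) = ((b k - b j : ℝ) : ℂ) := by push_cast; ring
    rw [h1, ← Complex.ofReal_sin]
    exact Complex.ofReal_ne_zero.mpr (hb k j hkj)
  have hxne : ∀ k, x ≠ c k := by
    intro k
    have : x - c k ≠ 0 := by
      rw [hxc k]
      exact mul_ne_zero (mul_ne_zero h2I (Complex.exp_ne_zero _)) (hz k)
    exact sub_ne_zero.mp this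
  have hcinj : Function.Injective c := by
    intro k j h
    by_contra hkj
    have h0 := hcc k j
    rw [h, sub_self] at h0
    exact (mul_ne_zero (mul_ne_zero h2I (Complex.exp_ne_zero _)) (hsinC k j hkj)) h0.symm
  set M : ℕ := (((m:ℤ) + n - ϑ) / 2).toNat with hMdef
  have hM : (M:ℤ) * 2 = (m:ℤ) + n - ϑ := by omega
  have hMc : ((M:ℕ):ℂ) * 2 = (m:ℂ) + (n:ℂ) - ((ϑ:ℤ):ℂ) := by exact_mod_cast hM
  have hBc : (B:ℂ) = ∑ k, ((b k:ℝ):ℂ) := by rw [hB]; push_cast; rfl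
  have hPne : (∏ k, Complex.sin (z - (b k:ℂ))) ≠ 0 :=
    Finset.prod_ne_zero_iff.mpr fun k _ => hz k
  have hQne : ∀ k, (∏ j ∈ univ.erase k, Complex.sin ((b k:ℂ) - (b j:ℂ))) ≠ 0 :=
    fun k => Finset.prod_ne_zero_iff.mpr fun j hj => hsinC k j (Finset.mem_erase.mp hj).1.symm
  have hprodsin : ∏ k, (x - c k)
      = (2*I)^(n+1) * Complex.exp (I*(((n:ℂ)+1)*z + (B:ℂ)))
          * ∏ k, Complex.sin (z - (b k:ℂ)) := by
    have hsum : ∑ k : Fin (n+1), (I*(z + (b k:ℂ))) = I*(((n:ℂ)+1)*z + (B:ℂ)) := by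
      rw [← Finset.mul_sum, Finset.sum_add_distrib, Finset.sum_const, Finset.card_univ,
        Fintype.card_fin, nsmul_eq_mul, hBc]
      push_cast
      ring
    calc ∏ k, (x - c k)
        = ∏ k, (2*I*Complex.exp (I*(z + (b k:ℂ))) * Complex.sin (z - (b k:ℂ))) :=
          Finset.prod_congr rfl (fun k _ => hxc k)
      _ = ((∏ _k : Fin (n+1), (2*I)) * ∏ k, Complex.exp (I*(z + (b k:ℂ))))
            * ∏ k, Complex.sin (z - (b k:ℂ)) := by
          rw [← Finset.prod_mul_distrib, ← Finset.prod_mul_distrib]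
      _ = (2*I)^(n+1) * Complex.exp (I*(((n:ℂ)+1)*z + (B:ℂ)))
            * ∏ k, Complex.sin (z - (b k:ℂ)) := by
          rw [Finset.prod_const, Finset.card_univ, Fintype.card_fin, ← Complex.exp_sum, hsum]
  have hprodQ : ∀ k, (∏ j ∈ univ.erase k, (c k - c j))
      = (2*I)^n * Complex.exp (I*((n:ℂ)*(b k:ℂ) + ((B:ℂ) - (b k:ℂ))))
          * ∏ j ∈ univ.erase k, Complex.sin ((b k:ℂ) - (b j:ℂ)) := by
    intro k
    have hcard : (univ.erase k).card = n := by
      rw [Finset.card_erase_of_mem (Finset.mem_univ k), Finset.card_univ, Fintype.card_fin]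
      omega
    have hsumer : ∑ j ∈ univ.erase k, ((b j:ℝ):ℂ) = (B:ℂ) - (b k:ℂ) := by
      rw [hBc, ← Finset.sum_erase_add univ _ (Finset.mem_univ k)]
      ring
    have hsum : ∑ j ∈ univ.erase k, (I*((b k:ℂ) + (b j:ℂ)))
        = I*((n:ℂ)*(b k:ℂ) + ((B:ℂ) - (b k:ℂ))) := by
      rw [← Finset.mul_sum, Finset.sum_add_distrib, Finset.sum_const, hcard,
        nsmul_eq_mul, hsumer]
    calc ∏ j ∈ univ.erase k, (c k - c j)
        = ∏ j ∈ univ.erase k,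
            (2*I*Complex.exp (I*((b k:ℂ) + (b j:ℂ))) * Complex.sin ((b k:ℂ) - (b j:ℂ))) :=
          Finset.prod_congr rfl (fun j _ => hcc k j)
      _ = ((∏ _j ∈ univ.erase k, (2*I)) * ∏ j ∈ univ.erase k, Complex.exp (I*((b k:ℂ) + (b j:ℂ))))
            * ∏ j ∈ univ.erase k, Complex.sin ((b k:ℂ) - (b j:ℂ)) := by
          rw [← Finset.prod_mul_distrib, ← Finset.prod_mul_distrib]
      _ = (2*I)^n * Complex.exp (I*((n:ℂ)*(b k:ℂ) + ((B:ℂ) - (b k:ℂ))))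
            * ∏ j ∈ univ.erase k, Complex.sin ((b k:ℂ) - (b j:ℂ)) := by
          rw [Finset.prod_const, hcard, ← Complex.exp_sum, hsum]
  have T1 : Complex.exp (I * m * z) / ∏ k, Complex.sin (z - (b k:ℂ))
      = (2*I)^(n+1) * Complex.exp (I*(B:ℂ)) * Complex.exp (I*((ϑ:ℤ):ℂ)*z) * Complex.exp (I*z)
          * (x ^ M / ∏ k, (x - c k)) := by
    have hxM : x ^ M = Complex.exp ((M:ℂ)*(2*I*z)) := by
      rw [hxdef, ← Complex.exp_nat_mul]
    have hDne : ((2*I)^(n+1) * Complex.exp (I*(((n:ℂ)+1)*z + (B:ℂ)))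
        * ∏ k, Complex.sin (z - (b k:ℂ))) ≠ 0 :=
      mul_ne_zero (mul_ne_zero (pow_ne_zero _ h2I) (Complex.exp_ne_zero _)) hPne
    rw [hprodsin, hxM, mul_div_assoc']
    rw [div_eq_div_iff hPne hDne]
    have Emerge : Complex.exp (I*(m:ℂ)*z) * Complex.exp (I*(((n:ℂ)+1)*z + (B:ℂ)))
        = Complex.exp (I*(B:ℂ)) * Complex.exp (I*((ϑ:ℤ):ℂ)*z) * Complex.exp (I*z)
            * Complex.exp ((M:ℂ)*(2*I*z)) := by
      rw [← Complex.exp_add, ← Complex.exp_add, ← Complex.exp_add, ← Complex.exp_add]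
      congr 1
      linear_combination (-(I*z))*hMc
    linear_combination ((2*I)^(n+1) * (∏ k, Complex.sin (z - (b k:ℂ)))) * Emerge
  rw [T1, key n c hcinj M x hxne, mul_add]
  congr 1
  · -- polynomial part
    have hrange : (((m:ℤ) - n - ϑ)/2).toNat = M - n := by omega
    rw [hrange, Finset.mul_sum]
    refine Finset.sum_congr rfl (fun j hj => ?_)
    have hjlt : j < M - n := Finset.mem_range.mp hj
    have hx2 : x ^ (M-n-1-j) = Complex.exp (((M-n-1-j : ℕ):ℂ) * (2*I*z)) := by
      rw [hxdef, ← Complex.exp_nat_mul]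
    have hcast : ((M-n-1-j:ℕ):ℂ) = (M:ℂ) - n - 1 - j := by
      have h1 : ((M-n-1-j:ℕ):ℤ) = (M:ℤ)-n-1-j := by omega
      exact_mod_cast h1
    have Em : Complex.exp (I*(((m:ℤ)-n-2*j-1 : ℤ):ℂ)*z)
        = Complex.exp (I*((ϑ:ℤ):ℂ)*z) * Complex.exp (I*z)
            * Complex.exp (((M:ℂ)-n-1-j)*(2*I*z)) := by
      rw [← Complex.exp_add, ← Complex.exp_add]
      congr 1
      push_cast
      linear_combination (-(I*z))*hMc
    rw [hx2, hcast, Em]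
    ring
  · -- residue part
    rw [Finset.mul_sum]
    refine Finset.sum_congr rfl (fun k _ => ?_)
    have hcM : c k ^ M = Complex.exp ((M:ℂ)*(2*I*(b k:ℂ))) := by
      rw [hcdef, ← Complex.exp_nat_mul]
    have hDne : ((2*I)^n * Complex.exp (I*((n:ℂ)*(b k:ℂ) + ((B:ℂ) - (b k:ℂ))))
          * (∏ j ∈ univ.erase k, Complex.sin ((b k:ℂ) - (b j:ℂ)))
        * (2*I*Complex.exp (I*(z + (b k:ℂ))) * Complex.sin (z - (b k:ℂ)))) ≠ 0 := by
      refine mul_ne_zero (mul_ne_zero (mul_ne_zero (pow_ne_zero _ h2I)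
        (Complex.exp_ne_zero _)) (hQne k))
        (mul_ne_zero (mul_ne_zero h2I (Complex.exp_ne_zero _)) (hz k))
    have hQSne : ((∏ j ∈ univ.erase k, Complex.sin ((b k:ℂ) - (b j:ℂ)))
        * Complex.sin (z - (b k:ℂ))) ≠ 0 := mul_ne_zero (hQne k) (hz k)
    rw [hprodQ k, hxc k, hcM, mul_div_assoc']
    rw [div_eq_div_iff hDne hQSne]
    have Emerge : Complex.exp (I*(((m:ℤ)-ϑ : ℤ):ℂ)*(b k:ℂ)) * Complex.exp (I*((ϑ:ℤ):ℂ)*z)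
          * Complex.exp (I*((n:ℂ)*(b k:ℂ) + ((B:ℂ) - (b k:ℂ)))) * Complex.exp (I*(z + (b k:ℂ)))
        = Complex.exp (I*(B:ℂ)) * Complex.exp (I*((ϑ:ℤ):ℂ)*z) * Complex.exp (I*z)
            * Complex.exp ((M:ℂ)*(2*I*(b k:ℂ))) := by
      simp only [← Complex.exp_add]
      congr 1
      push_cast
      linear_combination (-(I*(b k:ℂ)))*hMc
    linear_combination (-((2*I)^n * (2*I) * (∏ j ∈ univ.erase k, Complex.sin ((b k:ℂ) - (b j:ℂ)))
      * Complex.sin (z - (b k:ℂ)))) * Emerge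
end

section
/- Let 0 ≤ m ≤ n be an integer, b_0,…,b_n real distinct mod π, a real, and ϑ an integer with m−n ≤ ϑ ≤ n−m and ϑ ≡ m+n (mod 2). Then sin(mz−a)/∏_{k=0}^n sin(z−b_k) = Σ_{k=0}^n sin(m b_k − a) cos(ϑ(z−b_k)) / [ ∏_{j≠k} sin(b_k−b_j) · sin(z−b_k) ] for all z avoiding the poles. -/
/-!
Put `q = e^{iz}`, `α = e^{ia}`, `β_k = e^{i b_k}` and write `ϑ = t - s` with `m + s + t = n`,
which the range and parity of `ϑ` allow. Each sine and cosine becomes a Laurent monomial times a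
polynomial in the squares, e.g. `sin (z - b) = (q² - β²) / (2i q β)`, and then both sides of the
identity are the same constant multiple of the two sides of the partial fraction decomposition of
`P(q²) / ∏ (q² - β_k²)`, where `P(X) = (X^m - α²) (q^{2t} X^s + q^{2s} X^t)` has degree at most
`n`. That decomposition is Lagrange interpolation of `P` at the `n + 1` distinct nodes `β_k²`.
-/

open Finset Polynomial Complex

theorem Lagrange.eval_div_prod_sub_eq_sum {F ι : Type*} [Field F] [DecidableEq ι]
    {s : Finset ι} {v : ι → F} (hvs : Set.InjOn v s) {P : F[X]} (hP : P.degree < #s) {x : F}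
    (hx : ∀ i ∈ s, x ≠ v i) :
    P.eval x / ∏ i ∈ s, (x - v i) =
      ∑ i ∈ s, P.eval (v i) / ((∏ j ∈ s.erase i, (v i - v j)) * (x - v i)) := by
  have hnodal : ∏ i ∈ s, (x - v i) ≠ 0 := prod_ne_zero_iff.2 fun i hi => sub_ne_zero.2 (hx i hi)
  conv_lhs => rw [eq_interpolate hvs hP, eval_interpolate_not_at_node _ hx, eval_nodal,
    mul_div_cancel_left₀ _ hnodal]
  refine sum_congr rfl fun i _ => ?_
  rw [nodalWeight, prod_inv_distrib, div_eq_mul_inv, mul_inv]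
  ring

theorem Finset.prod_div_mul_left {ι G : Type*} [DivisionCommMonoid G] (s : Finset ι)
    (f g : ι → G) (a : G) :
    ∏ i ∈ s, f i / (a * g i) = (∏ i ∈ s, f i) / (a ^ #s * ∏ i ∈ s, g i) := by
  rw [prod_div_distrib, prod_mul_distrib, prod_const]

namespace Complex

theorem sin_sub_eq_exp (u v : ℂ) :
    sin (u - v) = (exp (u * I) ^ 2 - exp (v * I) ^ 2) / (2 * I * exp (u * I) * exp (v * I)) := by
  have hu := exp_ne_zero (u * I)
  have hv := exp_ne_zero (v * I)
  rw [sin, show -(u - v) * I = v * I - u * I by ring, show (u - v) * I = u * I - v * I by ring,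
    exp_sub, exp_sub]
  generalize exp (u * I) = X at *
  generalize exp (v * I) = Y at *
  field_simp
  linear_combination (Y ^ 2 - X ^ 2) * I_sq

theorem cos_sub_eq_exp (u v : ℂ) :
    cos (u - v) = (exp (u * I) ^ 2 + exp (v * I) ^ 2) / (2 * exp (u * I) * exp (v * I)) := by
  have hu := exp_ne_zero (u * I)
  have hv := exp_ne_zero (v * I)
  rw [cos, show -(u - v) * I = v * I - u * I by ring, show (u - v) * I = u * I - v * I by ring,
    exp_sub, exp_sub]
  field_simp

theorem sq_exp_mul_I_ne_of_sin_sub_ne_zero {u v : ℂ} (h : sin (u - v) ≠ 0) :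
    exp (u * I) ^ 2 ≠ exp (v * I) ^ 2 := by
  intro huv
  rw [sin_sub_eq_exp, huv, sub_self, zero_div] at h
  exact h rfl

theorem sin_natCast_mul_sub_eq_exp (m : ℕ) (u v : ℂ) :
    sin (m * u - v) =
      ((exp (u * I) ^ 2) ^ m - exp (v * I) ^ 2) / (2 * I * exp (u * I) ^ m * exp (v * I)) := by
  rw [sin_sub_eq_exp, mul_assoc, exp_nat_mul, ← pow_mul, ← pow_mul, mul_comm 2 m]

theorem cos_natCast_sub_mul_sub_eq_exp (s t : ℕ) (u v : ℂ) :
    cos ((t - s) * (u - v)) =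
      ((exp (u * I) ^ 2) ^ t * (exp (v * I) ^ 2) ^ s +
          (exp (u * I) ^ 2) ^ s * (exp (v * I) ^ 2) ^ t) /
        (2 * exp (u * I) ^ (s + t) * exp (v * I) ^ (s + t)) := by
  rw [show ((t : ℂ) - s) * (u - v) = (t * u + s * v) - (s * u + t * v) by ring, cos_sub_eq_exp]
  simp only [add_mul, exp_add, mul_assoc, exp_nat_mul]
  ring

end Complex

namespace SinCosExpansion

noncomputable def numerator {R : Type*} [CommRing R] (m s t : ℕ) (A y : R) : R[X] :=
  (X ^ m - C A) * (C (y ^ t) * X ^ s + C (y ^ s) * X ^ t)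

theorem degree_numerator_lt {R : Type*} [CommRing R] (m s t : ℕ) (A y : R) :
    (numerator m s t A y).degree < ↑(m + s + t + 1) := by
  have h : (numerator m s t A y).natDegree ≤ m + s + t := by
    unfold numerator
    compute_degree
    omega
  exact degree_le_natDegree.trans_lt (WithBot.coe_lt_coe.2 (Nat.lt_succ_of_le h))

theorem eval_numerator {R : Type*} [CommRing R] (m s t : ℕ) (A y x : R) :
    (numerator m s t A y).eval x = (x ^ m - A) * (y ^ t * x ^ s + y ^ s * x ^ t) := by
  simp [numerator]

noncomputable def scale (m s t : ℕ) (q α : ℂ) (β : Fin (m + s + t + 1) → ℂ) : ℂ :=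
  (2 * I) ^ (m + s + t) * (∏ k, β k) * q / (2 * α * q ^ (s + t))

section ExpCoordinates

variable {m s t : ℕ} {q α : ℂ} (β : Fin (m + s + t + 1) → ℂ)

theorem lhs_eq_scale_mul (hq : q ≠ 0) (hα : α ≠ 0) :
    ((q ^ 2) ^ m - α ^ 2) / (2 * I * q ^ m * α) / ∏ k, (q ^ 2 - β k ^ 2) / (2 * I * q * β k) =
      scale m s t q α β *
        ((numerator m s t (α ^ 2) (q ^ 2)).eval (q ^ 2) / ∏ k, (q ^ 2 - β k ^ 2)) := by
  rw [prod_div_mul_left, eval_numerator, card_univ, Fintype.card_fin, div_div_eq_mul_div, scale]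
  field_simp
  ring

theorem summand_eq_scale_mul (hq : q ≠ 0) (hα : α ≠ 0) (hβ : ∀ k, β k ≠ 0)
    (k : Fin (m + s + t + 1)) :
    ((β k ^ 2) ^ m - α ^ 2) / (2 * I * β k ^ m * α) *
        (((q ^ 2) ^ t * (β k ^ 2) ^ s + (q ^ 2) ^ s * (β k ^ 2) ^ t) /
          (2 * q ^ (s + t) * β k ^ (s + t))) /
        ((∏ j ∈ univ.erase k, (β k ^ 2 - β j ^ 2) / (2 * I * β k * β j)) *
          ((q ^ 2 - β k ^ 2) / (2 * I * q * β k))) =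
      scale m s t q α β *
        ((numerator m s t (α ^ 2) (q ^ 2)).eval (β k ^ 2) /
          ((∏ j ∈ univ.erase k, (β k ^ 2 - β j ^ 2)) * (q ^ 2 - β k ^ 2))) := by
  rw [prod_div_mul_left, eval_numerator, card_erase_of_mem (mem_univ k), card_univ,
    Fintype.card_fin, Nat.add_sub_cancel, scale, ← mul_prod_erase univ β (mem_univ k)]
  have hβk := hβ k
  have hβ' : ∏ j ∈ univ.erase k, β j ≠ 0 := prod_ne_zero_iff.2 fun j _ => hβ j
  field_simp
  ring

end ExpCoordinates

end SinCosExpansion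

open SinCosExpansion in
theorem sin_over_sine_cos_expansion_general (n : ℕ) (b : Fin (n + 1) → ℝ)
    (hb : ∀ j k, j ≠ k → Real.sin (b j - b k) ≠ 0)
    (m : ℕ) (a : ℝ) (ϑ : ℤ)
    (hϑl : (m : ℤ) - n ≤ ϑ) (hϑu : ϑ ≤ (n : ℤ) - m)
    (hpar : ϑ % 2 = ((m : ℤ) + n) % 2)
    (z : ℂ) (hz : ∀ k, Complex.sin (z - (b k : ℂ)) ≠ 0) :
    Complex.sin ((m : ℂ) * z - (a : ℂ)) / ∏ k, Complex.sin (z - (b k : ℂ))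
      = ∑ k, Complex.sin ((m : ℂ) * (b k : ℂ) - (a : ℂ)) *
            Complex.cos ((ϑ : ℂ) * (z - (b k : ℂ))) /
          ((∏ j ∈ univ.erase k, Complex.sin ((b k : ℂ) - (b j : ℂ))) *
            Complex.sin (z - (b k : ℂ))) := by
  obtain ⟨s, t, rfl, rfl⟩ : ∃ s t : ℕ, ϑ = t - s ∧ n = m + s + t :=
    ⟨((n : ℤ) - m - ϑ).toNat / 2, ((n : ℤ) - m + ϑ).toNat / 2, by omega, by omega⟩
  have hnodes : Set.InjOn (fun k => exp (b k * I) ^ 2) ↑(univ : Finset (Fin (m + s + t + 1))) := by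
    intro j _ k _ hjk
    by_contra hne
    refine sq_exp_mul_I_ne_of_sin_sub_ne_zero ?_ hjk
    exact_mod_cast hb j k hne
  have hx : ∀ k ∈ univ, exp (z * I) ^ 2 ≠ exp (b k * I) ^ 2 :=
    fun k _ => sq_exp_mul_I_ne_of_sin_sub_ne_zero (hz k)
  push_cast
  -- before `sin_sub_eq_exp`, which would also match `sin (m * z - a)`
  simp only [sin_natCast_mul_sub_eq_exp]
  simp only [cos_natCast_sub_mul_sub_eq_exp, sin_sub_eq_exp]
  rw [lhs_eq_scale_mul _ (exp_ne_zero _) (exp_ne_zero _),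
    Lagrange.eval_div_prod_sub_eq_sum hnodes (by simpa using degree_numerator_lt ..) hx, mul_sum]
  exact sum_congr rfl fun k _ =>
    (summand_eq_scale_mul _ (exp_ne_zero _) (exp_ne_zero _) (fun _ => exp_ne_zero _) k).symm

theorem sin_over_sine_cos_expansion (n : ℕ) (b : Fin (n + 1) → ℝ)
    (hb : ∀ j k, j ≠ k → Real.sin (b j - b k) ≠ 0)
    (m : ℕ) (hm : m ≤ n) (a : ℝ) (ϑ : ℤ)
    (hϑl : (m : ℤ) - n ≤ ϑ) (hϑu : ϑ ≤ (n : ℤ) - m)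
    (hpar : ϑ % 2 = ((m : ℤ) + n) % 2)
    (z : ℂ) (hz : ∀ k, Complex.sin (z - (b k : ℂ)) ≠ 0) :
    Complex.sin ((m : ℂ) * z - (a : ℂ)) / ∏ k, Complex.sin (z - (b k : ℂ))
      = ∑ k, Complex.sin ((m : ℂ) * (b k : ℂ) - (a : ℂ)) *
            Complex.cos ((ϑ : ℂ) * (z - (b k : ℂ))) /
          ((∏ j ∈ univ.erase k, Complex.sin ((b k : ℂ) - (b j : ℂ))) *
            Complex.sin (z - (b k : ℂ))) :=
  sin_over_sine_cos_expansion_general n b hb m a ϑ hϑl hϑu hpar z hz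
end
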